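/- arXiv:2312.16869 — 3 statements merged into one kernel-verified Lean document; each statement's English description precedes it below -/
import Mathlib

section
/- Let $p_\infty\in L^2((0,T);H^1(\mathbb{R}^n))$ and $\rho_\infty\in L^\infty((0,T)\times\mathbb{R}^n)$ with $0\le\rho_\infty\le 1$ and $p_\infty=\rho_\infty p_\infty$ almost everywhere. Then $\rho_\infty\nabla p_\infty=\nabla p_\infty$ almost everywhere on $(0,T)\times\mathbb{R}^n$. -/
open MeasureTheory Metric Set Filter Pointwise
open scoped RealInnerProductSpace ENNReal

/-- The gradient of an everywhere-differentiable function vanishes a.e. on its zero set. -/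
lemma grad_zero_ae_on_zero_set {n : ℕ}
    (f : EuclideanSpace ℝ (Fin n) → ℝ)
    (G : EuclideanSpace ℝ (Fin n) → EuclideanSpace ℝ (Fin n))
    (hf : ∀ x, HasGradientAt f (G x) x) :
    ∀ᵐ x ∂(volume : Measure (EuclideanSpace ℝ (Fin n))), f x = 0 → G x = 0 := by
  have hcont : Continuous f := by
    rw [continuous_iff_continuousAt]
    exact fun x => (hf x).hasFDerivAt.differentiableAt.continuousAt
  set S : Set (EuclideanSpace ℝ (Fin n)) := f ⁻¹' {0} with hS
  have hSc : IsClosed S := isClosed_singleton.preimage hcont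
  have hd := Besicovitch.ae_tendsto_measure_inter_div_of_measurableSet
    (volume : Measure (EuclideanSpace ℝ (Fin n))) hSc.measurableSet
  filter_upwards [hd] with x hx hfx
  by_contra hG
  have hxS : x ∈ S := by simpa [hS] using hfx
  rw [Set.indicator_of_mem hxS, Pi.one_apply] at hx
  set c : ℝ := ‖G x‖ with hc
  have hcpos : 0 < c := norm_pos_iff.mpr hG
  -- little-o estimate
  have hfd := (hf x).hasFDerivAt
  rw [hasFDerivAt_iff_isLittleO_nhds_zero] at hfd
  have hev := hfd.def (show (0:ℝ) < c/4 by linarith)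
  rw [Metric.eventually_nhds_iff] at hev
  obtain ⟨δ, hδ, hball⟩ := hev
  -- the cone
  set C : Set (EuclideanSpace ℝ (Fin n)) := {w | c/2 * ‖w‖ < ⟪G x, w⟫} with hCdef
  have hCopen : IsOpen C :=
    isOpen_lt (continuous_const.mul continuous_norm) (continuous_const.inner continuous_id)
  -- points of the cone close to x are not in S
  have hcone_out : ∀ w ∈ C, ‖w‖ < δ → x + w ∉ S := by
    intro w hw hwδ
    have hw' : c/2 * ‖w‖ < ⟪G x, w⟫ := hw
    have hwpos : 0 < ‖w‖ := by
      rcases (norm_nonneg w).lt_or_eq with h | h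
      · exact h
      · exfalso
        have hw0 : w = 0 := by rwa [eq_comm, norm_eq_zero] at h
        rw [hw0] at hw'
        simp at hw'
    have hb := hball (show dist w 0 < δ by simpa [dist_zero_right] using hwδ)
    rw [InnerProductSpace.toDual_apply_apply] at hb
    have hfx0 : f x = 0 := hxS
    intro hmem
    have hfy : f (x + w) = 0 := hmem
    rw [hfy, hfx0] at hb
    simp only [zero_sub, sub_zero, norm_neg, Real.norm_eq_abs] at hb
    have h2 : ⟪G x, w⟫ ≤ c/4 * ‖w‖ := (abs_le.mp hb).2
    nlinarith
  -- measure quantities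
  set b : ℝ≥0∞ := volume (ball (0 : EuclideanSpace ℝ (Fin n)) 1) with hbdef
  set β : ℝ≥0∞ := volume (C ∩ ball (0 : EuclideanSpace ℝ (Fin n)) 1) with hβdef
  have hbpos : 0 < b := measure_ball_pos volume 0 one_pos
  have hbfin : b < ⊤ := measure_ball_lt_top
  have hβpos : 0 < β := by
    apply (hCopen.inter isOpen_ball).measure_pos volume
    have h2c : (2*c)⁻¹ * c = 1/2 := by field_simp
    refine ⟨(2*c)⁻¹ • G x, ?_, ?_⟩
    · show c/2 * ‖(2*c)⁻¹ • G x‖ < ⟪G x, (2*c)⁻¹ • G x⟫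
      rw [norm_smul, real_inner_smul_right, real_inner_self_eq_norm_sq,
        Real.norm_eq_abs, abs_of_pos (by positivity), ← hc]
      nlinarith
    · rw [mem_ball_zero_iff, norm_smul, Real.norm_eq_abs, abs_of_pos (by positivity), ← hc]
      linarith
  have hβleb : β ≤ b := measure_mono Set.inter_subset_right
  -- scaling of the cone
  have hscale : ∀ r : ℝ, 0 < r →
      C ∩ ball (0 : EuclideanSpace ℝ (Fin n)) r = r • (C ∩ ball 0 1) := by
    intro r hr
    have hrinv : (0:ℝ) < r⁻¹ := inv_pos.mpr hr
    have hrr : r * r⁻¹ = 1 := mul_inv_cancel₀ (ne_of_gt hr)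
    ext w
    rw [Set.mem_smul_set_iff_inv_smul_mem₀ (ne_of_gt hr)]
    simp only [Set.mem_inter_iff, mem_ball_zero_iff, hCdef, Set.mem_setOf_eq,
      norm_smul, real_inner_smul_right, Real.norm_eq_abs, abs_of_pos hrinv]
    constructor
    · rintro ⟨h1, h2⟩
      exact ⟨by nlinarith [mul_lt_mul_of_pos_left h1 hrinv],
             by nlinarith [mul_lt_mul_of_pos_left h2 hrinv]⟩
    · rintro ⟨h1, h2⟩
      exact ⟨by nlinarith [mul_lt_mul_of_pos_left h1 hr],
             by nlinarith [mul_lt_mul_of_pos_left h2 hr]⟩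
  -- the ratio bound
  set q : ℝ≥0∞ := (b - β) / b with hq
  have hqlt1 : q < 1 := by
    rw [hq, ENNReal.div_lt_iff (Or.inl hbpos.ne') (Or.inl hbfin.ne), one_mul]
    exact ENNReal.sub_lt_self hbfin.ne hbpos.ne' hβpos.ne'
  have hratio : ∀ r : ℝ, 0 < r → r < δ →
      volume (S ∩ closedBall x r) / volume (closedBall x r) ≤ q := by
    intro r hr hrδ
    have hk : volume (closedBall x r) = ENNReal.ofReal (r^n) * b := by
      rw [Measure.addHaar_closedBall volume x hr.le, finrank_euclideanSpace_fin]
    have hCr : volume (x +ᵥ (C ∩ ball (0 : EuclideanSpace ℝ (Fin n)) r))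
        = ENNReal.ofReal (r^n) * β := by
      rw [measure_vadd, hscale r hr, Measure.addHaar_smul, finrank_euclideanSpace_fin,
        abs_of_pos (pow_pos hr n)]
    have hdisj : Disjoint (x +ᵥ (C ∩ ball (0 : EuclideanSpace ℝ (Fin n)) r))
        (S ∩ closedBall x r) := by
      rw [Set.disjoint_left]
      rintro y ⟨w, ⟨hwC, hwb⟩, rfl⟩ ⟨hyS, -⟩
      exact hcone_out w hwC (lt_trans (mem_ball_zero_iff.mp hwb) hrδ) hyS
    have hunion_sub : (x +ᵥ (C ∩ ball (0 : EuclideanSpace ℝ (Fin n)) r))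
        ∪ (S ∩ closedBall x r) ⊆ closedBall x r := by
      rintro y (⟨w, ⟨-, hwb⟩, rfl⟩ | ⟨-, hy⟩)
      · have hwr : ‖w‖ < r := mem_ball_zero_iff.mp hwb
        have : dist (x +ᵥ w) x = ‖w‖ := by
          simp [vadd_eq_add, dist_eq_norm]
        rw [mem_closedBall, this]
        exact hwr.le
      · exact hy
    have hmeasA : MeasurableSet (S ∩ closedBall x r) := (hSc.inter isClosed_closedBall).measurableSet
    have hsum : volume (x +ᵥ (C ∩ ball (0 : EuclideanSpace ℝ (Fin n)) r))
        + volume (S ∩ closedBall x r) ≤ volume (closedBall x r) := by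
      rw [← measure_union hdisj hmeasA]
      exact measure_mono hunion_sub
    have hle : volume (S ∩ closedBall x r)
        ≤ ENNReal.ofReal (r^n) * b - ENNReal.ofReal (r^n) * β := by
      rw [← hk, ← hCr]
      refine ENNReal.le_sub_of_add_le_left ?_ hsum
      rw [hCr]
      exact ENNReal.mul_ne_top ENNReal.ofReal_ne_top (lt_of_le_of_lt hβleb hbfin).ne
    have hk0 : ENNReal.ofReal (r^n) ≠ 0 := by
      simp [ENNReal.ofReal_eq_zero, not_le, pow_pos hr n]
    calc volume (S ∩ closedBall x r) / volume (closedBall x r)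
        ≤ (ENNReal.ofReal (r^n) * b - ENNReal.ofReal (r^n) * β)
          / (ENNReal.ofReal (r^n) * b) := by
          rw [hk]; exact ENNReal.div_le_div_right hle _
      _ = (ENNReal.ofReal (r^n) * (b - β)) / (ENNReal.ofReal (r^n) * b) := by
          rw [ENNReal.mul_sub (fun _ _ => ENNReal.ofReal_ne_top)]
      _ = (b - β) / b := ENNReal.mul_div_mul_left _ _ hk0 ENNReal.ofReal_ne_top
  have h1q : (1:ℝ≥0∞) ≤ q := by
    refine le_of_tendsto hx ?_
    filter_upwards [Ioo_mem_nhdsGT_of_mem (Set.left_mem_Ico.mpr hδ)] with r hr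
    exact hratio r hr.1 hr.2
  exact absurd (lt_of_le_of_lt h1q hqlt1) (lt_irrefl _)

/-- If `p_∞ ∈ L²((0,T);H¹(ℝⁿ))`, `0 ≤ ρ_∞ ≤ 1` and `p_∞ = ρ_∞ p_∞` a.e., then
`ρ_∞ ∇p_∞ = ∇p_∞` a.e. on `(0,T)×ℝⁿ`. The spatial gradient of `p_∞` is the
function `g`. -/
theorem stmt_6 {n : ℕ} (T : ℝ) (hT : 0 < T)
    (p ρ : ℝ × EuclideanSpace ℝ (Fin n) → ℝ)
    (g : ℝ × EuclideanSpace ℝ (Fin n) → EuclideanSpace ℝ (Fin n))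
    (μ : Measure (ℝ × EuclideanSpace ℝ (Fin n)))
    (hμ : μ = (volume.restrict (Set.Ioo 0 T)).prod volume)
    (hgrad : ∀ t x, HasGradientAt (fun y => p (t, y)) (g (t, x)) x)
    (hpL2 : MemLp p 2 μ) (hgL2 : MemLp g 2 μ)
    (hρ_bd : ∀ z, ρ z ∈ Set.Icc (0 : ℝ) 1)
    (hrel : ∀ᵐ z ∂μ, p z = ρ z * p z) :
    ∀ᵐ z ∂μ, ρ z • g z = g z := by
  subst hμ
  -- slice-wise: gradient vanishes a.e. where p vanishes
  have hkey : ∀ t : ℝ, ∀ᵐ x ∂(volume : Measure (EuclideanSpace ℝ (Fin n))),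
      p (t, x) = 0 → g (t, x) = 0 :=
    fun t => grad_zero_ae_on_zero_set (fun y => p (t, y)) (fun x => g (t, x)) (hgrad t)
  -- measurable versions
  obtain ⟨p', hp'm, hpp'⟩ := hpL2.aestronglyMeasurable
  obtain ⟨g', hg'm, hgg'⟩ := hgL2.aestronglyMeasurable
  set ν := (volume.restrict (Set.Ioo (0:ℝ) T)).prod (volume : Measure (EuclideanSpace ℝ (Fin n)))
  have hBmeas : MeasurableSet {z : ℝ × EuclideanSpace ℝ (Fin n) | p' z = 0 ∧ ¬ g' z = 0} := by
    have h1 : MeasurableSet (p' ⁻¹' {0}) := hp'm.measurable (measurableSet_singleton 0)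
    have h2 : MeasurableSet (g' ⁻¹' {0}) := hg'm.measurable (measurableSet_singleton 0)
    exact h1.inter h2.compl
  have hB0 : ν {z : ℝ × EuclideanSpace ℝ (Fin n) | p' z = 0 ∧ ¬ g' z = 0} = 0 := by
    rw [Measure.measure_prod_null hBmeas]
    have h1 := Measure.ae_ae_of_ae_prod hpp'
    have h2 := Measure.ae_ae_of_ae_prod hgg'
    filter_upwards [h1, h2] with t ht1 ht2
    have : ∀ᵐ x ∂(volume : Measure (EuclideanSpace ℝ (Fin n))),
        x ∉ Prod.mk t ⁻¹' {z : ℝ × EuclideanSpace ℝ (Fin n) | p' z = 0 ∧ ¬ g' z = 0} := by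
      filter_upwards [hkey t, ht1, ht2] with x hkx hpx hgx
      intro hmem
      obtain ⟨hp0, hgne⟩ := hmem
      exact hgne (hgx ▸ hkx (hpx ▸ hp0))
    simpa [ae_iff] using this
  have hB0' : ∀ᵐ z ∂ν, ¬ (p' z = 0 ∧ ¬ g' z = 0) := by
    rw [ae_iff]
    simpa using hB0
  filter_upwards [hrel, hpp', hgg', hB0'] with z hz hpz hgz hBz
  rcases eq_or_ne (ρ z) 1 with hρ1 | hρ1
  · rw [hρ1, one_smul]
  · have hpz0 : p z = 0 := by
      have h : p z * (1 - ρ z) = 0 := by nlinarith [hz]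
      rcases mul_eq_zero.mp h with h | h
      · exact h
      · exact absurd (by linarith : ρ z = 1) hρ1
    have hg0 : g z = 0 := by
      by_contra hne
      exact hBz ⟨hpz ▸ hpz0, fun h => hne (hgz.trans h)⟩
    rw [hg0, smul_zero]
end

section
/- Let $\rho_\infty:(0,T)\times\mathbb{R}^n\to[0,1]$ satisfy $\partial_t\rho_\infty\in L^2((0,T);H^{-1}(\mathbb{R}^n))$, and let $p_\infty\in L^2((0,T);H^1(\mathbb{R}^n))$, $p_\infty\ge 0$, satisfy $p_\infty(1-\rho_\infty)=0$ a.e. Then $\langle\partial_t\rho_\infty, p_\infty\rangle = 0$, i.e. $\int_0^T\langle\partial_t\rho_\infty(t),p_\infty(t)\rangle_{H^{-1},H^1}\,dt=0$. -/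
open MeasureTheory

/-- If `0 ≤ ρ_∞ ≤ 1` has time derivative `dρ` (the realization of
`∂_t ρ_∞ ∈ L²((0,T);H⁻¹)`), `p_∞ ≥ 0` belongs to `L²((0,T);H¹)` and
`p_∞ (1 - ρ_∞) = 0` a.e., then `∫₀ᵀ ⟨∂_t ρ_∞, p_∞⟩ dt = ∬ ∂_t ρ_∞ p_∞ = 0`. -/
theorem stmt_8 {n : ℕ} (T : ℝ) (hT : 0 < T)
    (ρ p dρ : ℝ × EuclideanSpace ℝ (Fin n) → ℝ)
    (g : ℝ × EuclideanSpace ℝ (Fin n) → EuclideanSpace ℝ (Fin n))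
    (μ : Measure (ℝ × EuclideanSpace ℝ (Fin n)))
    (hμ : μ = (volume.restrict (Set.Ioo 0 T)).prod volume)
    (hρ_bd : ∀ z, ρ z ∈ Set.Icc (0 : ℝ) 1)
    (hρ_t : ∀ t x, HasDerivAt (fun s => ρ (s, x)) (dρ (t, x)) t)
    (hdρ_L2 : MemLp dρ 2 μ)
    (hp_nonneg : ∀ z, 0 ≤ p z)
    (hp_L2 : MemLp p 2 μ)
    (hp_grad : ∀ t x, HasGradientAt (fun y => p (t, y)) (g (t, x)) x)
    (hg_L2 : MemLp g 2 μ)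
    (hrel : ∀ᵐ z ∂μ, p z * (1 - ρ z) = 0)
    (hint : Integrable (fun z => dρ z * p z) μ) :
    ∫ z, dρ z * p z ∂μ = 0 := by
  have hae : ∀ᵐ z ∂μ, dρ z * p z = 0 := by
    filter_upwards [hrel] with z hz
    rcases eq_or_lt_of_le (hp_nonneg z) with h0 | hpos
    · rw [← h0, mul_zero]
    · have hρ1 : ρ z = 1 := by
        have := (mul_eq_zero.mp hz).resolve_left (ne_of_gt hpos)
        linarith
      have hmax : IsLocalMax (fun s => ρ (s, z.2)) z.1 := by
        apply Filter.Eventually.of_forall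
        intro s
        simpa [Prod.mk.eta, hρ1] using (hρ_bd (s, z.2)).2
      have hd := hρ_t z.1 z.2
      have : dρ (z.1, z.2) = 0 := hmax.hasDerivAt_eq_zero hd
      rw [Prod.mk.eta] at this
      rw [this, zero_mul]
  exact integral_eq_zero_of_ae hae
end

section
/- Let $0<\varepsilon\le\tfrac12$, $m\ge 2$, and let $p_m=\rho_m^m$ with $\rho_m\ge0$ sufficiently smooth. Then pointwise $\big|\nabla(p_m^{\frac{m+1}{m}})-\tfrac{m+1}{m}\nabla p_m\big| \le 4\,|\nabla(p_m^{1/2})|\,(1-\varepsilon)^{m/2} + |\nabla(p_m^{\frac{m+1}{m}})|\,\big[2\varepsilon + \mathbf{1}_{\{\rho_m>1+\varepsilon\}}\tfrac{\rho_m-1}{\rho_m}\big]$. -/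
open MeasureTheory

set_option maxHeartbeats 1000000 in
/-- Pointwise inequality: for `0 < ε ≤ 1/2`, `m ≥ 2`, `p_m = ρ_m^m` with `ρ_m ≥ 0` smooth,
`|∇(p_m^{(m+1)/m}) - ((m+1)/m) ∇p_m| ≤ 4 |∇(p_m^{1/2})| (1-ε)^{m/2}`
`+ |∇(p_m^{(m+1)/m})| [2ε + 1_{ρ_m > 1+ε} (ρ_m-1)/ρ_m]`. -/
theorem stmt_9 {n : ℕ} (ε : ℝ) (hε0 : 0 < ε) (hε : ε ≤ 1 / 2)
    (m : ℕ) (hm : 2 ≤ m)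
    (ρ : EuclideanSpace ℝ (Fin n) → ℝ) (hρ : ∀ x, 0 ≤ ρ x)
    (hρsmooth : ContDiff ℝ (⊤ : ℕ∞) ρ)
    (p : EuclideanSpace ℝ (Fin n) → ℝ) (hp : ∀ x, p x = ρ x ^ (m : ℝ))
    (x : EuclideanSpace ℝ (Fin n))
    (g₁ g₂ g₃ : EuclideanSpace ℝ (Fin n))
    (hg₁ : HasGradientAt (fun y => p y ^ (((m : ℝ) + 1) / m)) g₁ x)
    (hg₂ : HasGradientAt p g₂ x)
    (hg₃ : HasGradientAt (fun y => p y ^ ((1 : ℝ) / 2)) g₃ x) :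
    ‖g₁ - (((m : ℝ) + 1) / m) • g₂‖
      ≤ 4 * ‖g₃‖ * (1 - ε) ^ ((m : ℝ) / 2)
        + ‖g₁‖ * (2 * ε +
            Set.indicator {y | ρ y > 1 + ε} (fun y => (ρ y - 1) / ρ y) x) := by
  have hm0 : (0:ℝ) < m := by positivity
  have hmne : (m:ℝ) ≠ 0 := hm0.ne'
  have hρd : DifferentiableAt ℝ ρ x := (hρsmooth.differentiable (by simp)).differentiableAt
  obtain ⟨D, hD⟩ : ∃ D, HasFDerivAt ρ D x := ⟨fderiv ℝ ρ x, hρd.hasFDerivAt⟩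
  set r := ρ x with hrdef
  have hr0 : 0 ≤ r := hρ x
  set d : EuclideanSpace ℝ (Fin n) :=
    (InnerProductSpace.toDual ℝ (EuclideanSpace ℝ (Fin n))).symm D with hddef
  have hDd : D = InnerProductSpace.toDual ℝ (EuclideanSpace ℝ (Fin n)) d := by
    simp [hddef]
  -- function identities
  have hfun2 : p = fun y => ρ y ^ m := by
    funext y; rw [hp y, Real.rpow_natCast]
  have hfun1 : (fun y => p y ^ (((m : ℝ) + 1) / m)) = fun y => ρ y ^ (m + 1) := by
    funext y
    rw [hp y, ← Real.rpow_natCast (ρ y) (m + 1), ← Real.rpow_mul (hρ y)]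
    congr 1
    push_cast
    field_simp
  have hfun3 : (fun y => p y ^ ((1:ℝ) / 2)) = fun y => ρ y ^ ((m : ℝ) / 2) := by
    funext y
    rw [hp y, ← Real.rpow_mul (hρ y)]
    congr 1; ring
  -- gradient identities
  have key : ∀ (g : EuclideanSpace ℝ (Fin n)) (c : ℝ) (f : EuclideanSpace ℝ (Fin n) → ℝ),
      HasGradientAt f g x → HasFDerivAt f (c • D) x → g = c • d := by
    intro g c f hg hf
    have h1 := hg.hasFDerivAt.unique hf
    apply (InnerProductSpace.toDual ℝ (EuclideanSpace ℝ (Fin n))).injective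
    rw [h1, hDd, LinearIsometryEquiv.map_smul]
  have hg2' : g₂ = ((m : ℝ) * r ^ (m - 1)) • d := by
    refine key _ _ _ hg₂ ?_
    rw [hfun2]
    exact (hasDerivAt_pow m r).comp_hasFDerivAt x hD
  have hg1' : g₁ = (((m : ℝ) + 1) * r ^ m) • d := by
    refine key _ _ _ hg₁ ?_
    rw [hfun1]
    have := (hasDerivAt_pow (m + 1) r).comp_hasFDerivAt x hD
    simpa [Function.comp_def] using this
  have hnd : 0 ≤ ‖d‖ := norm_nonneg d
  have h1ε : (0:ℝ) < 1 - ε := by linarith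
  have hpow : (0:ℝ) ≤ (1 - ε) ^ ((m : ℝ) / 2) := Real.rpow_nonneg h1ε.le _
  have hpowsplit : r ^ m = r ^ (m - 1) * r := by
    rw [← pow_succ, Nat.sub_add_cancel (by omega)]
  have hLHS : ‖g₁ - (((m : ℝ) + 1) / m) • g₂‖
      = ((m : ℝ) + 1) * r ^ (m - 1) * |r - 1| * ‖d‖ := by
    rw [hg1', hg2', smul_smul, ← sub_smul, norm_smul, Real.norm_eq_abs]
    have h : ((m : ℝ) + 1) * r ^ m - ((m : ℝ) + 1) / m * ((m : ℝ) * r ^ (m - 1))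
        = ((m : ℝ) + 1) * r ^ (m - 1) * (r - 1) := by
      rw [hpowsplit]; field_simp
    rw [h, abs_mul, abs_of_nonneg (by positivity : (0:ℝ) ≤ ((m:ℝ)+1) * r ^ (m-1))]
  have hg1n : ‖g₁‖ = ((m : ℝ) + 1) * r ^ m * ‖d‖ := by
    rw [hg1', norm_smul, Real.norm_eq_abs, abs_of_nonneg (by positivity)]
  rcases eq_or_lt_of_le hr0 with hr | hr
  · -- r = 0
    have hrm : r ^ (m - 1) = 0 := by rw [← hr]; exact zero_pow (by omega)
    have hind : Set.indicator {y | ρ y > 1 + ε} (fun y => (ρ y - 1) / ρ y) x = 0 := by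
      apply Set.indicator_of_notMem
      simp only [Set.mem_setOf_eq, ← hrdef, ← hr]; push_neg; linarith
    rw [hLHS, hrm, hind, add_zero]
    have h1 : (0:ℝ) ≤ 4 * ‖g₃‖ * (1 - ε) ^ ((m : ℝ) / 2) := by positivity
    have h2 : (0:ℝ) ≤ ‖g₁‖ * (2 * ε) := by positivity
    have h3 : ((m : ℝ) + 1) * 0 * |r - 1| * ‖d‖ = 0 := by ring
    linarith [h3.le, h3.ge]
  · -- r > 0
    have hg3' : g₃ = ((m : ℝ) / 2 * r ^ ((m : ℝ) / 2 - 1)) • d := by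
      refine key _ _ _ hg₃ ?_
      rw [hfun3]
      exact (Real.hasDerivAt_rpow_const (Or.inl hr.ne')).comp_hasFDerivAt x hD
    have hg3n : ‖g₃‖ = (m : ℝ) / 2 * r ^ ((m : ℝ) / 2 - 1) * ‖d‖ := by
      rw [hg3', norm_smul, Real.norm_eq_abs, abs_of_nonneg]
      have := Real.rpow_pos_of_pos hr ((m : ℝ) / 2 - 1)
      positivity
    rcases le_or_gt r (1 - ε) with hcase | hcase
    · -- r ≤ 1 - ε : core estimate
      have hind : Set.indicator {y | ρ y > 1 + ε} (fun y => (ρ y - 1) / ρ y) x = 0 := by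
        apply Set.indicator_of_notMem
        simp only [Set.mem_setOf_eq, ← hrdef]; push_neg; linarith
      rw [hLHS, hg3n, hind, add_zero]
      have habs : |r - 1| = 1 - r := by rw [abs_sub_comm, abs_of_nonneg (by linarith)]
      have hrm1 : r ^ (m - 1) = r ^ ((m : ℝ) / 2 - 1) * r ^ ((m : ℝ) / 2) := by
        rw [← Real.rpow_add hr, ← Real.rpow_natCast r (m - 1)]
        congr 1
        have hc : ((m - 1 : ℕ) : ℝ) = (m : ℝ) - 1 := by
          rw [Nat.cast_sub (by omega : 1 ≤ m)]; norm_num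
        rw [hc]; ring
      have hrpow : r ^ ((m : ℝ) / 2) ≤ (1 - ε) ^ ((m : ℝ) / 2) :=
        Real.rpow_le_rpow hr0 hcase (by positivity)
      have hra : (0:ℝ) < r ^ ((m : ℝ) / 2 - 1) := Real.rpow_pos_of_pos hr _
      have hrb : (0:ℝ) ≤ r ^ ((m : ℝ) / 2) := Real.rpow_nonneg hr0 _
      have hkey : ((m : ℝ) + 1) * r ^ (m - 1) * (1 - r)
          ≤ 4 * ((m : ℝ) / 2 * r ^ ((m : ℝ) / 2 - 1)) * (1 - ε) ^ ((m : ℝ) / 2) := by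
        rw [hrm1]
        have h1 : ((m : ℝ) + 1) ≤ 2 * m := by
          have : (2:ℝ) ≤ m := by exact_mod_cast hm
          linarith
        have h2 : (1 - r) ≤ 1 := by linarith
        calc ((m : ℝ) + 1) * (r ^ ((m : ℝ) / 2 - 1) * r ^ ((m : ℝ) / 2)) * (1 - r)
            ≤ 2 * m * (r ^ ((m : ℝ) / 2 - 1) * (1 - ε) ^ ((m : ℝ) / 2)) * 1 := by
              gcongr
              all_goals linarith
          _ = 4 * ((m : ℝ) / 2 * r ^ ((m : ℝ) / 2 - 1)) * (1 - ε) ^ ((m : ℝ) / 2) := by ring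
      have h2 : (0:ℝ) ≤ ‖g₁‖ * (2 * ε) := by positivity
      calc ((m : ℝ) + 1) * r ^ (m - 1) * |r - 1| * ‖d‖
          = (((m : ℝ) + 1) * r ^ (m - 1) * (1 - r)) * ‖d‖ := by rw [habs]; try ring
        _ ≤ (4 * ((m : ℝ) / 2 * r ^ ((m : ℝ) / 2 - 1)) * (1 - ε) ^ ((m : ℝ) / 2)) * ‖d‖ :=
            mul_le_mul_of_nonneg_right hkey hnd
        _ = 4 * ((m : ℝ) / 2 * r ^ ((m : ℝ) / 2 - 1) * ‖d‖) * (1 - ε) ^ ((m : ℝ) / 2) := by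
            ring
        _ ≤ 4 * ((m : ℝ) / 2 * r ^ ((m : ℝ) / 2 - 1) * ‖d‖) * (1 - ε) ^ ((m : ℝ) / 2)
              + ‖g₁‖ * (2 * ε) := by linarith
    · -- r > 1 - ε
      have hrhalf : (1:ℝ)/2 ≤ r := by linarith
      have hratio : |r - 1| / r ≤ 2 * ε +
          Set.indicator {y | ρ y > 1 + ε} (fun y => (ρ y - 1) / ρ y) x := by
        rcases le_or_gt r (1 + ε) with h2 | h2
        · have hind : Set.indicator {y | ρ y > 1 + ε} (fun y => (ρ y - 1) / ρ y) x = 0 := by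
            apply Set.indicator_of_notMem
            simp only [Set.mem_setOf_eq, ← hrdef]; push_neg; linarith
          rw [hind, add_zero, div_le_iff₀ hr]
          have : |r - 1| ≤ ε := abs_le.mpr ⟨by linarith, by linarith⟩
          nlinarith
        · have hind : Set.indicator {y | ρ y > 1 + ε} (fun y => (ρ y - 1) / ρ y) x
              = (r - 1) / r := by
            apply Set.indicator_of_mem
            simp only [Set.mem_setOf_eq, ← hrdef]; linarith
          rw [hind, abs_of_nonneg (by linarith : (0:ℝ) ≤ r - 1)]
          linarith
      have hLHS2 : ‖g₁ - (((m : ℝ) + 1) / m) • g₂‖ = ‖g₁‖ * (|r - 1| / r) := by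
        rw [hLHS, hg1n, hpowsplit]
        field_simp
      rw [hLHS2]
      have h3 : ‖g₁‖ * (|r - 1| / r) ≤ ‖g₁‖ * (2 * ε +
          Set.indicator {y | ρ y > 1 + ε} (fun y => (ρ y - 1) / ρ y) x) :=
        mul_le_mul_of_nonneg_left hratio (norm_nonneg g₁)
      have h1 : (0:ℝ) ≤ 4 * ‖g₃‖ * (1 - ε) ^ ((m : ℝ) / 2) := by positivity
      linarith
end
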